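/- arXiv:2003.07405 — 6 statements merged into one kernel-verified Lean document; each statement's English description precedes it below -/
import Mathlib

section
/- Let n > m ≥ 1 be natural numbers, m = m₁ + m₂ with 0 ≤ m₁ ≤ m, and α ∈ (0, π/2). With c(α) = −arctan(((n − m₁)sin α + m₂ sin 3α)/((n + m₁)cos α + m₂ cos 3α)) and S = √(s₁² + s₂²) where s₁, s₂ are the numerator and denominator above, one has cos(c(α) + α) = (n − m + 2m·cos²α)/S; in particular cos(c(α) + α) > 0. -/
/-!
Writing `c = -arctan (s₁ / s₂)` with `s₂ > 0`, the angle addition formula gives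
`cos (c + α) = (s₂ cos α + s₁ sin α) / S`. In the numerator the `m₂` terms combine to
`m₂ cos 2α` and the `n ± m₁` terms to `n + m₁ cos 2α`, so it equals `n + m cos 2α`,
which is positive because `m < n`.
-/

open Real

theorem Real.cos_sub_arctan_div {x y : ℝ} (hy : 0 < y) (α : ℝ) :
    cos (α - arctan (x / y)) = (y * cos α + x * sin α) / √(x ^ 2 + y ^ 2) := by
  have hsqrt : √(x ^ 2 + y ^ 2) = y * √(1 + (x / y) ^ 2) := by
    rw [show x ^ 2 + y ^ 2 = y ^ 2 * (1 + (x / y) ^ 2) by field_simp; ring,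
      sqrt_mul (by positivity), sqrt_sq hy.le]
  rw [cos_sub, cos_arctan, sin_arctan, hsqrt]
  field_simp

theorem Real.add_mul_cos_add_sub_mul_sin_add (a b c α : ℝ) :
    ((a + b) * cos α + c * cos (3 * α)) * cos α + ((a - b) * sin α + c * sin (3 * α)) * sin α
      = a + (b + c) * cos (2 * α) := by
  have hcos : cos (3 * α) * cos α + sin (3 * α) * sin α = cos (2 * α) := by
    rw [← cos_sub]; ring_nf
  rw [cos_two_mul] at hcos ⊢
  linear_combination c * hcos + (a - b) * sin_sq_add_cos_sq α

theorem stmt_2_general (n m m₁ m₂ : ℕ) (hmn : m < n) (hsplit : m = m₁ + m₂)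
    (α : ℝ)
    (s₁ s₂ S c : ℝ)
    (hs₁ : s₁ = ((n : ℝ) - m₁) * Real.sin α + (m₂ : ℝ) * Real.sin (3 * α))
    (hs₂ : s₂ = ((n : ℝ) + m₁) * Real.cos α + (m₂ : ℝ) * Real.cos (3 * α))
    (hS : S = Real.sqrt (s₁ ^ 2 + s₂ ^ 2))
    (hc : c = -Real.arctan (s₁ / s₂))
    (hs₂pos : 0 < s₂) :
    Real.cos (c + α) = ((n : ℝ) - m + 2 * m * Real.cos α ^ 2) / S ∧
      0 < Real.cos (c + α) := by
  have hnum : s₂ * cos α + s₁ * sin α = (n : ℝ) - m + 2 * m * cos α ^ 2 := by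
    rw [hs₁, hs₂, add_mul_cos_add_sub_mul_sin_add, cos_two_mul, hsplit]
    push_cast
    ring
  have hcos : cos (c + α) = ((n : ℝ) - m + 2 * m * cos α ^ 2) / S := by
    rw [hc, neg_add_eq_sub, cos_sub_arctan_div hs₂pos, ← hnum, hS]
  have hnm : (0 : ℝ) < n - m := sub_pos.mpr (by exact_mod_cast hmn)
  have hSpos : 0 < S := hS ▸ sqrt_pos.mpr (by positivity)
  exact ⟨hcos, hcos ▸ by positivity⟩

/-- With `c(α) = −arctan(s₁/s₂)` and `S = √(s₁²+s₂²)` for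
`s₁ = (n−m₁)sin α + m₂ sin 3α`, `s₂ = (n+m₁)cos α + m₂ cos 3α`,
one has `cos(c(α)+α) = (n − m + 2m cos²α)/S`, which is positive. -/
theorem stmt_2 (n m m₁ m₂ : ℕ) (hmn : m < n) (hm : 1 ≤ m) (hsplit : m = m₁ + m₂)
    (α : ℝ) (hα0 : 0 < α) (hα1 : α < π / 2)
    (s₁ s₂ S c : ℝ)
    (hs₁ : s₁ = ((n : ℝ) - m₁) * Real.sin α + (m₂ : ℝ) * Real.sin (3 * α))
    (hs₂ : s₂ = ((n : ℝ) + m₁) * Real.cos α + (m₂ : ℝ) * Real.cos (3 * α))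
    (hS : S = Real.sqrt (s₁ ^ 2 + s₂ ^ 2))
    (hc : c = -Real.arctan (s₁ / s₂))
    (hs₂pos : 0 < s₂) :
    Real.cos (c + α) = ((n : ℝ) - m + 2 * m * Real.cos α ^ 2) / S ∧
      0 < Real.cos (c + α) :=
  stmt_2_general n m m₁ m₂ hmn hsplit α s₁ s₂ S c hs₁ hs₂ hS hc hs₂pos
end

section
/- Let n > m ≥ 1 and α ∈ (0, π/2) with tan α < √((n+m)/(n−m)), and set c(α) = −arctan(((n−m)/(n+m)) tan α). Then the (N−1)×(N−1) block-diagonal matrix J = diag(R₁, R₂), where R₁ = −m·cos(c(α)−α)·I_{n−1} and R₂ = −n·cos(c(α)+α)·I_m − cos(c(α)−α)·𝟙ₘ𝟙ₘᵀ, is Hurwitz (all eigenvalues have strictly negative real part). Conversely, if tan α > √((n+m)/(n−m)) then J has a strictly positive eigenvalue. -/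
/-!
The Jacobian is block diagonal, so its eigenvalues are `-m cos(c - α)` (from `R₁`) and those of
`R₂ = b I + d 𝟙𝟙ᵀ`, which are `b` (on vectors with zero sum) and `b + m d` (on `𝟙`).
For `c = -arctan x` one has `cos(α + arctan x) = cos α (1 - x tan α) / √(1 + x²)`. Hence
`cos(c + α) > 0` always, while `cos(c - α)` has the sign of `1 - ((n-m)/(n+m)) tan² α`, which
changes exactly at `tan α = √((n+m)/(n-m))`.
-/

open Matrix Real

namespace Matrix

open Module.End

variable {K ι κ : Type*} [Field K] [Fintype ι] [DecidableEq ι] [Fintype κ] [DecidableEq κ]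

theorem hasEigenvalue_toLin'_fromBlocks_zero₂₁_iff (A : Matrix ι ι K) (B : Matrix ι κ K)
    (D : Matrix κ κ K) (μ : K) :
    HasEigenvalue (toLin' (fromBlocks A B 0 D)) μ ↔
      HasEigenvalue (toLin' A) μ ∨ HasEigenvalue (toLin' D) μ := by
  simp only [hasEigenvalue_iff_isRoot_charpoly, charpoly_toLin',
    charpoly_fromBlocks_zero₂₁, Polynomial.IsRoot, Polynomial.eval_mul, mul_eq_zero]

theorem hasEigenvalue_toLin'_smul_one_iff [Nonempty ι] (a μ : K) :
    HasEigenvalue (toLin' (a • 1 : Matrix ι ι K)) μ ↔ μ = a := by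
  rw [smul_one_eq_diagonal, hasEigenvalue_toLin'_diagonal_iff]
  simp [eq_comm]

theorem eq_or_eq_add_of_hasEigenvalue_toLin'_smul_one_add_smul_ones {b d μ : K}
    (h : HasEigenvalue (toLin' (b • 1 + d • of fun _ _ => 1 : Matrix κ κ K)) μ) :
    μ = b ∨ μ = b + Fintype.card κ * d := by
  obtain ⟨v, hv⟩ := h.exists_hasEigenvector
  have hrow : ∀ i, b * v i + d * ∑ j, v j = μ * v i := fun i => by
    simpa [add_mulVec, smul_mulVec, mulVec, dotProduct, Finset.mul_sum] using
      congrFun hv.apply_eq_smul i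
  by_cases hs : ∑ j, v j = 0
  · obtain ⟨i, hi⟩ := Function.ne_iff.mp hv.2
    left
    exact mul_right_cancel₀ hi (by simpa [hs] using hrow i) |>.symm
  · right
    have hsum : (b + Fintype.card κ * d) * ∑ j, v j = μ * ∑ j, v j := by
      have := Finset.sum_congr rfl fun i (_ : i ∈ Finset.univ) => hrow i
      simp only [Finset.sum_add_distrib, ← Finset.mul_sum, Finset.sum_const, Finset.card_univ,
        nsmul_eq_mul] at this
      linear_combination this
    exact (mul_right_cancel₀ hs hsum).symm

theorem re_neg_of_hasEigenvalue_map_fromBlocks {a b d : ℝ} (ha : a < 0) (hb : b < 0)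
    (hbd : b + Fintype.card κ * d < 0) {μ : ℂ}
    (hμ : HasEigenvalue (toLin' ((fromBlocks (a • 1 : Matrix ι ι ℝ) 0 0
      (b • 1 + d • of fun _ _ => 1 : Matrix κ κ ℝ)).map Complex.ofReal)) μ) :
    μ.re < 0 := by
  have hmap : (fromBlocks (a • 1 : Matrix ι ι ℝ) 0 0
      (b • 1 + d • of fun _ _ => 1 : Matrix κ κ ℝ)).map Complex.ofReal =
      fromBlocks ((a : ℂ) • 1) 0 0 ((b : ℂ) • 1 + (d : ℂ) • of fun _ _ => 1) := by
    ext (i | i) (j | j) <;> simp [Matrix.one_apply, apply_ite Complex.ofReal]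
  rw [hmap, hasEigenvalue_toLin'_fromBlocks_zero₂₁_iff] at hμ
  rcases hμ with hμ | hμ
  · have := hμ.nonempty
    rw [(hasEigenvalue_toLin'_smul_one_iff _ _).mp hμ, Complex.ofReal_re]
    exact ha
  · rcases eq_or_eq_add_of_hasEigenvalue_toLin'_smul_one_add_smul_ones hμ with rfl | rfl
    · rwa [Complex.ofReal_re]
    · rwa [← Complex.ofReal_natCast, ← Complex.ofReal_mul, ← Complex.ofReal_add, Complex.ofReal_re]

end Matrix

namespace Real

theorem cos_add_arctan (α x : ℝ) (hα : cos α ≠ 0) :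
    cos (α + arctan x) = cos α * (1 - x * tan α) / √(1 + x ^ 2) := by
  rw [cos_add, cos_arctan, sin_arctan, tan_eq_sin_div_cos]
  field_simp

theorem cos_add_arctan_pos_iff {α : ℝ} (x : ℝ) (hα : 0 < cos α) :
    0 < cos (α + arctan x) ↔ x * tan α < 1 := by
  rw [cos_add_arctan α x hα.ne', div_pos_iff_of_pos_right (by positivity),
    mul_pos_iff_of_pos_left hα, sub_pos]

theorem cos_add_arctan_neg_iff {α : ℝ} (x : ℝ) (hα : 0 < cos α) :
    cos (α + arctan x) < 0 ↔ 1 < x * tan α := by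
  rw [cos_add_arctan α x hα.ne', ← neg_pos, ← neg_div, div_pos_iff_of_pos_right (by positivity),
    ← mul_neg, mul_pos_iff_of_pos_left hα, neg_sub, sub_pos]

theorem cos_neg_arctan_mul_tan_sub_pos_iff {r α : ℝ} (hr : 0 < r) (hα0 : 0 < α)
    (hα1 : α < π / 2) : 0 < cos (-arctan (r * tan α) - α) ↔ tan α < √r⁻¹ := by
  rw [show -arctan (r * tan α) - α = -(α + arctan (r * tan α)) by ring, cos_neg,
    cos_add_arctan_pos_iff _ (cos_pos_of_mem_Ioo ⟨by linarith, hα1⟩),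
    lt_sqrt (tan_pos_of_pos_of_lt_pi_div_two hα0 hα1).le, ← one_div, lt_div_iff₀ hr, mul_assoc,
    mul_comm r, sq]

theorem cos_neg_arctan_mul_tan_sub_neg_iff {r α : ℝ} (hr : 0 < r) (hα0 : 0 < α)
    (hα1 : α < π / 2) : cos (-arctan (r * tan α) - α) < 0 ↔ √r⁻¹ < tan α := by
  rw [show -arctan (r * tan α) - α = -(α + arctan (r * tan α)) by ring, cos_neg,
    cos_add_arctan_neg_iff _ (cos_pos_of_mem_Ioo ⟨by linarith, hα1⟩),
    sqrt_lt' (tan_pos_of_pos_of_lt_pi_div_two hα0 hα1), ← one_div, div_lt_iff₀ hr, mul_assoc,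
    mul_comm r, sq]

theorem cos_neg_arctan_mul_tan_add_pos {r α : ℝ} (hr : 0 ≤ r) (hα0 : 0 < α) (hα1 : α < π / 2) :
    0 < cos (-arctan (r * tan α) + α) := by
  have ht := tan_pos_of_pos_of_lt_pi_div_two hα0 hα1
  rw [← arctan_neg, add_comm, cos_add_arctan_pos_iff _ (cos_pos_of_mem_Ioo ⟨by linarith, hα1⟩),
    neg_mul]
  linarith [mul_nonneg (mul_nonneg hr ht.le) ht.le]

end Real

/-- Stability threshold: for `c(α) = −arctan(((n−m)/(n+m))tan α)`, the
block-diagonal Jacobian `J = diag(R₁, R₂)` with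
`R₁ = −m cos(c−α) I_{n−1}` and `R₂ = −n cos(c+α) I_m − cos(c−α) 𝟙𝟙ᵀ` is
Hurwitz when `tan α < √((n+m)/(n−m))`, and has a strictly positive eigenvalue
when `tan α > √((n+m)/(n−m))`. -/
theorem stmt_11 (n m : ℕ) (hmn : m < n) (hm : 1 ≤ m)
    (α : ℝ) (hα0 : 0 < α) (hα1 : α < π / 2)
    (c : ℝ) (hc : c = -Real.arctan ((((n : ℝ) - m) / ((n : ℝ) + m)) * Real.tan α))
    (R₁ : Matrix (Fin (n - 1)) (Fin (n - 1)) ℝ)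
    (R₂ : Matrix (Fin m) (Fin m) ℝ)
    (hR₁ : R₁ = (-((m : ℝ) * Real.cos (c - α))) • (1 : Matrix (Fin (n - 1)) (Fin (n - 1)) ℝ))
    (hR₂ : R₂ = (-((n : ℝ) * Real.cos (c + α))) • (1 : Matrix (Fin m) (Fin m) ℝ) +
      (-(Real.cos (c - α))) • (Matrix.of fun _ _ => (1 : ℝ)))
    (J : Matrix (Fin (n - 1) ⊕ Fin m) (Fin (n - 1) ⊕ Fin m) ℝ)
    (hJ : J = Matrix.fromBlocks R₁ 0 0 R₂) :
    (Real.tan α < Real.sqrt (((n : ℝ) + m) / ((n : ℝ) - m)) →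
      ∀ μ : ℂ, Module.End.HasEigenvalue (Matrix.toLin' (J.map (Complex.ofReal : ℝ → ℂ))) μ →
        μ.re < 0) ∧
    (Real.sqrt (((n : ℝ) + m) / ((n : ℝ) - m)) < Real.tan α →
      ∃ μ : ℝ, 0 < μ ∧ Module.End.HasEigenvalue (Matrix.toLin' J) μ) := by
  have hm_pos : (0 : ℝ) < m := by exact_mod_cast hm
  have hn_pos : (0 : ℝ) < n := by exact_mod_cast Nat.zero_lt_of_lt hmn
  have hr : 0 < ((n : ℝ) - m) / ((n : ℝ) + m) :=
    div_pos (sub_pos.mpr (by exact_mod_cast hmn)) (by positivity)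
  rw [← inv_div]
  subst hc
  have hcos_add := cos_neg_arctan_mul_tan_add_pos hr.le hα0 hα1
  constructor
  · intro hlt μ hμ
    have hcos_sub := (cos_neg_arctan_mul_tan_sub_pos_iff hr hα0 hα1).mpr hlt
    subst hJ hR₁ hR₂
    refine re_neg_of_hasEigenvalue_map_fromBlocks ?_ ?_ ?_ hμ
    · linarith [mul_pos hm_pos hcos_sub]
    · linarith [mul_pos hn_pos hcos_add]
    · rw [Fintype.card_fin]
      linarith [mul_pos hn_pos hcos_add, mul_pos hm_pos hcos_sub]
  · intro hgt
    have hcos_sub := (cos_neg_arctan_mul_tan_sub_neg_iff hr hα0 hα1).mpr hgt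
    have : Nonempty (Fin (n - 1)) := ⟨⟨0, by omega⟩⟩
    refine ⟨_, neg_pos.mpr (mul_neg_of_pos_of_neg hm_pos hcos_sub), ?_⟩
    rw [hJ, hasEigenvalue_toLin'_fromBlocks_zero₂₁_iff, hR₁, hasEigenvalue_toLin'_smul_one_iff]
    exact Or.inl rfl
end

section
/- Let n > m ≥ 1, α ∈ (0, π/2), c(α) = −arctan(((n−m)/(n+m)) tan α). The matrix R₂' = n·cos(c(α)+α)·I_m + cos(c(α)−α)·𝟙ₘ𝟙ₘᵀ (the negative of the Jacobian block at the second equilibrium e₂) has a strictly positive eigenvalue n·cos(c(α)+α) whenever m ≥ 2, and its eigenvalue n·cos(c(α)+α) + m·cos(c(α)−α) is strictly positive for all α ∈ (0, π/2); hence R₂' always has a strictly positive eigenvalue. -/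
/-!
Vectors with coordinate sum zero are eigenvectors of `a • 1 + b • 𝟙𝟙ᵀ` for `a`, and `𝟙` is one
for `a + m b`. With `θ = arctan (k tan α)`, `0 < k < 1`, we have `0 < θ < α`, so `c + α = α - θ`
lies in `(0, π/2)`, and `n cos (α - θ) + m cos (α + θ) = (n + m) cos α cos θ + (n - m) sin α sin θ`
is positive.
-/

open Matrix Real

section ScalarPlusAllOnes

variable {ι K : Type*} [Fintype ι] [DecidableEq ι] [CommRing K]

theorem smul_one_add_smul_allOnes_mulVec (a b : K) (v : ι → K) :
    (a • (1 : Matrix ι ι K) + b • Matrix.of fun _ _ => (1 : K)) *ᵥ v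
      = fun i => a * v i + b * ∑ j, v j := by
  funext i
  simp [mulVec, dotProduct, add_mul, Matrix.one_apply, Finset.sum_add_distrib, Finset.mul_sum]

theorem hasEigenvalue_smul_one_add_smul_allOnes [Nontrivial ι] [Nontrivial K] (a b : K) :
    Module.End.HasEigenvalue
      (toLin' (a • (1 : Matrix ι ι K) + b • Matrix.of fun _ _ => (1 : K))) a := by
  obtain ⟨i, j, hij⟩ := exists_pair_ne ι
  refine Module.End.hasEigenvalue_of_hasEigenvector (x := Pi.single i 1 - Pi.single j 1) ⟨?_, ?_⟩
  · rw [Module.End.mem_eigenspace_iff, toLin'_apply, smul_one_add_smul_allOnes_mulVec]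
    funext k
    simp [Finset.sum_sub_distrib]
  · intro h
    simpa [hij] using congrFun h i

theorem hasEigenvalue_smul_one_add_smul_allOnes_add_card_mul [Nonempty ι] [Nontrivial K]
    (a b : K) :
    Module.End.HasEigenvalue
      (toLin' (a • (1 : Matrix ι ι K) + b • Matrix.of fun _ _ => (1 : K)))
      (a + Fintype.card ι * b) := by
  refine Module.End.hasEigenvalue_of_hasEigenvector (x := fun _ => 1) ⟨?_, ?_⟩
  · rw [Module.End.mem_eigenspace_iff, toLin'_apply, smul_one_add_smul_allOnes_mulVec]
    funext k
    simp [mul_comm]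
  · exact (Function.const_ne_zero).2 one_ne_zero

end ScalarPlusAllOnes

theorem arctan_mul_tan_mem_Ioo {k α : ℝ} (hk0 : 0 < k) (hk1 : k < 1)
    (hα0 : 0 < α) (hα1 : α < π / 2) : arctan (k * tan α) ∈ Set.Ioo 0 α := by
  have htan : 0 < tan α := tan_pos_of_pos_of_lt_pi_div_two hα0 hα1
  constructor
  · simpa using arctan_strictMono (mul_pos hk0 htan)
  · calc arctan (k * tan α) < arctan (tan α) :=
          arctan_strictMono (mul_lt_of_lt_one_left htan hk1)
      _ = α := arctan_tan (by linarith) hα1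

theorem weighted_cos_sub_add_cos_add_pos {a b θ α : ℝ} (hab : -a < b) (hba : b < a)
    (hθ0 : 0 < θ) (hθ1 : θ < π / 2) (hα0 : 0 < α) (hα1 : α < π / 2) :
    0 < a * cos (α - θ) + b * cos (α + θ) := by
  have hcos : 0 < cos α * cos θ :=
    mul_pos (cos_pos_of_mem_Ioo ⟨by linarith, hα1⟩) (cos_pos_of_mem_Ioo ⟨by linarith, hθ1⟩)
  have hsin : 0 < sin α * sin θ :=
    mul_pos (sin_pos_of_pos_of_lt_pi hα0 (by linarith [pi_pos]))
      (sin_pos_of_pos_of_lt_pi hθ0 (by linarith [pi_pos]))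
  calc 0 < (a + b) * (cos α * cos θ) + (a - b) * (sin α * sin θ) := by
        have := mul_pos (by linarith : 0 < a + b) hcos
        have := mul_pos (by linarith : 0 < a - b) hsin
        linarith
    _ = a * cos (α - θ) + b * cos (α + θ) := by rw [cos_sub, cos_add]; ring

/-- The matrix `R₂' = n cos(c(α)+α) I_m + cos(c(α)−α) 𝟙𝟙ᵀ` has the strictly
positive eigenvalue `n cos(c(α)+α)` when `m ≥ 2`, and the eigenvalue
`n cos(c(α)+α) + m cos(c(α)−α)` is strictly positive for all `α ∈ (0, π/2)`;
hence `R₂'` always has a strictly positive eigenvalue. -/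
theorem stmt_12 (n m : ℕ) (hmn : m < n) (hm : 1 ≤ m)
    (α : ℝ) (hα0 : 0 < α) (hα1 : α < π / 2)
    (c : ℝ) (hc : c = -Real.arctan ((((n : ℝ) - m) / ((n : ℝ) + m)) * Real.tan α))
    (R₂' : Matrix (Fin m) (Fin m) ℝ)
    (hR₂' : R₂' = ((n : ℝ) * Real.cos (c + α)) • (1 : Matrix (Fin m) (Fin m) ℝ) +
      (Real.cos (c - α)) • (Matrix.of fun _ _ => (1 : ℝ))) :
    (2 ≤ m → 0 < (n : ℝ) * Real.cos (c + α) ∧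
      Module.End.HasEigenvalue (Matrix.toLin' R₂') ((n : ℝ) * Real.cos (c + α))) ∧
    (0 < (n : ℝ) * Real.cos (c + α) + (m : ℝ) * Real.cos (c - α) ∧
      Module.End.HasEigenvalue (Matrix.toLin' R₂')
        ((n : ℝ) * Real.cos (c + α) + (m : ℝ) * Real.cos (c - α))) ∧
    (∃ μ : ℝ, 0 < μ ∧ Module.End.HasEigenvalue (Matrix.toLin' R₂') μ) := by
  have hmn' : (m : ℝ) < n := by exact_mod_cast hmn
  have hm' : (1 : ℝ) ≤ m := by exact_mod_cast hm
  set θ := arctan ((((n : ℝ) - m) / ((n : ℝ) + m)) * tan α)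
  obtain ⟨hθ0, hθα⟩ : θ ∈ Set.Ioo 0 α :=
    arctan_mul_tan_mem_Ioo (div_pos (by linarith) (by linarith))
      ((div_lt_one (by linarith)).2 (by linarith)) hα0 hα1
  have hplus : c + α = α - θ := by rw [hc]; ring
  have hminus : cos (c - α) = cos (α + θ) := by rw [hc, ← cos_neg]; ring_nf
  have hfirst : 0 < (n : ℝ) * cos (c + α) :=
    mul_pos (by linarith) (cos_pos_of_mem_Ioo ⟨by linarith [hplus], by linarith [hplus]⟩)
  have hsecond : 0 < (n : ℝ) * cos (c + α) + m * cos (c - α) := by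
    rw [hplus, hminus]
    exact weighted_cos_sub_add_cos_add_pos (by linarith) hmn' hθ0
      (hθα.trans hα1) hα0 hα1
  have : Nonempty (Fin m) := ⟨⟨0, hm⟩⟩
  have hcard := hasEigenvalue_smul_one_add_smul_allOnes_add_card_mul (ι := Fin m)
    ((n : ℝ) * cos (c + α)) (cos (c - α))
  rw [Fintype.card_fin, ← hR₂'] at hcard
  refine ⟨fun h2m => ⟨hfirst, ?_⟩, ⟨hsecond, hcard⟩, _, hsecond, hcard⟩
  have : Nontrivial (Fin m) := Fin.nontrivial_iff_two_le.2 h2m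
  exact hR₂' ▸ hasEigenvalue_smul_one_add_smul_allOnes _ _
end

section
/- (Proposition: w₂ > 0, case m = 2.) Let m = 2, n ≥ 3 natural numbers, α ∈ (0, π/2), m₁ = 1, m₂ = 1, s₁ = (n−1)sin α + sin 3α, s₂ = (n+1)cos α + cos 3α, S = √(s₁² + s₂²), c(α) = −arctan(s₁/s₂), a = cos(c(α)+α), b = cos(c(α)−α), c = −cos(c(α)+3α). Then S·(b + n·a − c) = (n−m+1)(n−m−1+2(m+1)cos²α) + 2(m−1)(8cos⁴α+(n+m−7)cos²α) + 1 with m = 2, i.e. S·(b + n·a − c) = (n−1)(n−3+6cos²α) + 2(8cos⁴α+(n−5)cos²α) + 1, and this quantity is strictly positive; hence b + n·a − c > 0. -/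
open Real

/-- Case `m = 2`: with `m₁ = m₂ = 1`, the identity
`S((m−1)b + na − c) = (n−m+1)(n−m−1+2(m+1)cos²α) + 2(m−1)(8cos⁴α+(n+m−7)cos²α) + 1`
holds and is strictly positive; hence `b + na − c > 0`. -/
theorem stmt_13 (n : ℕ) (hn : 3 ≤ n)
    (α : ℝ) (hα0 : 0 < α) (hα1 : α < π / 2)
    (s₁ s₂ S cα a b c : ℝ)
    (hs₁ : s₁ = ((n : ℝ) - 1) * Real.sin α + Real.sin (3 * α))
    (hs₂ : s₂ = ((n : ℝ) + 1) * Real.cos α + Real.cos (3 * α))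
    (hS : S = Real.sqrt (s₁ ^ 2 + s₂ ^ 2))
    (hcα : cα = -Real.arctan (s₁ / s₂))
    (hs₂pos : 0 < s₂)
    (ha : a = Real.cos (cα + α)) (hb : b = Real.cos (cα - α))
    (hc : c = -Real.cos (cα + 3 * α)) :
    S * (((2 : ℝ) - 1) * b + (n : ℝ) * a - c) =
      ((n : ℝ) - 2 + 1) * ((n : ℝ) - 2 - 1 + 2 * ((2 : ℝ) + 1) * Real.cos α ^ 2) +
        2 * ((2 : ℝ) - 1) * (8 * Real.cos α ^ 4 + ((n : ℝ) + 2 - 7) * Real.cos α ^ 2) + 1 ∧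
    0 < S * (((2 : ℝ) - 1) * b + (n : ℝ) * a - c) ∧
    0 < ((2 : ℝ) - 1) * b + (n : ℝ) * a - c := by
  have hn' : (3 : ℝ) ≤ (n : ℝ) := by exact_mod_cast hn
  have hsum : 0 < s₁ ^ 2 + s₂ ^ 2 := by positivity
  have hSpos : 0 < S := by rw [hS]; exact Real.sqrt_pos.mpr hsum
  have hS2 : S ^ 2 = s₁ ^ 2 + s₂ ^ 2 := by
    rw [hS]; exact Real.sq_sqrt hsum.le
  have hsq : Real.sqrt (1 + (s₁ / s₂) ^ 2) = S / s₂ := by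
    have h1 : 1 + (s₁ / s₂) ^ 2 = (S / s₂) ^ 2 := by
      field_simp
      linarith [hS2]
    rw [h1, Real.sqrt_sq (by positivity)]
  have hcos : S * Real.cos cα = s₂ := by
    rw [hcα, Real.cos_neg, Real.cos_arctan, hsq]
    field_simp
  have hsin : S * Real.sin cα = -s₁ := by
    rw [hcα, Real.sin_neg, Real.sin_arctan, hsq]
    field_simp
  have key : S * (((2 : ℝ) - 1) * b + (n : ℝ) * a - c) = s₁ ^ 2 + s₂ ^ 2 := by
    rw [ha, hb, hc, Real.cos_add, Real.cos_sub, Real.cos_add]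
    have e1 : S * (((2 : ℝ) - 1) * (Real.cos cα * Real.cos α + Real.sin cα * Real.sin α)
        + (n : ℝ) * (Real.cos cα * Real.cos α - Real.sin cα * Real.sin α)
        - -(Real.cos cα * Real.cos (3 * α) - Real.sin cα * Real.sin (3 * α))) =
        (S * Real.cos cα) * (((n : ℝ) + 1) * Real.cos α + Real.cos (3 * α)) +
        (S * Real.sin cα) * ((1 - (n : ℝ)) * Real.sin α - Real.sin (3 * α)) := by ring
    rw [e1, hcos, hsin, hs₁, hs₂]
    ring
  have hident : S * (((2 : ℝ) - 1) * b + (n : ℝ) * a - c) =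
      ((n : ℝ) - 2 + 1) * ((n : ℝ) - 2 - 1 + 2 * ((2 : ℝ) + 1) * Real.cos α ^ 2) +
        2 * ((2 : ℝ) - 1) * (8 * Real.cos α ^ 4 + ((n : ℝ) + 2 - 7) * Real.cos α ^ 2) + 1 := by
    rw [key, hs₁, hs₂, Real.sin_three_mul, Real.cos_three_mul]
    linear_combination (((n : ℝ) + 2) ^ 2
      - 8 * ((n : ℝ) + 2) * (Real.sin α ^ 2 + 1 - Real.cos α ^ 2)
      + 16 * (Real.sin α ^ 4 + Real.sin α ^ 2 * (1 - Real.cos α ^ 2)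
          + (1 - Real.cos α ^ 2) ^ 2)) * Real.sin_sq_add_cos_sq α
  have hpos : 0 < S * (((2 : ℝ) - 1) * b + (n : ℝ) * a - c) := by
    rw [hident]
    nlinarith [sq_nonneg (Real.cos α), sq_nonneg (Real.cos α ^ 2)]
  refine ⟨hident, hpos, ?_⟩
  nlinarith [hSpos, hpos]
end

section
/- (Proposition: w₂ > 0, general case.) Let m ≥ 3 and n > m be natural numbers, α ∈ (0, π/2), m₁ = m−1, m₂ = 1, and define s₁ = (n−m+1)sin α + sin 3α, s₂ = (n+m−1)cos α + cos 3α, S = √(s₁²+s₂²), c(α) = −arctan(s₁/s₂), a = cos(c(α)+α), b = cos(c(α)−α), c = −cos(c(α)+3α). Then S·((m−1)b + n·a − c) = (n−m+1)(n−m−1+2(m+1)cos²α) + 2(m−1)(8cos⁴α + (n+m−7)cos²α) + 1 > 0, and hence (m−1)b + n·a − c > 0. -/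
open Real

/-! Rotating the vector `(s₂, s₁)` by `c(α) = -arctan (s₁/s₂)` onto the positive axis turns
`S · cos (c(α) + θ)` into the linear form `s₂ cos θ + s₁ sin θ`. Substituting `s₁, s₂` and
the triple-angle formulas makes `S((m−1)b + na − c)` a polynomial in `cos² α`, all of whose
coefficients are nonnegative once `m ≥ 3` and `n ≥ m + 1`, and whose constant term is `1`. -/

lemma sqrt_mul_cos_neg_arctan_div_add {x y : ℝ} (hy : 0 < y) (θ : ℝ) :
    √(x ^ 2 + y ^ 2) * cos (-arctan (x / y) + θ) = y * cos θ + x * sin θ := by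
  have hsqrt : √(1 + (x / y) ^ 2) = √(x ^ 2 + y ^ 2) / y := by
    rw [show 1 + (x / y) ^ 2 = (x ^ 2 + y ^ 2) / y ^ 2 by field_simp; ring,
      sqrt_div (by positivity), sqrt_sq hy.le]
  have hS : 0 < √(x ^ 2 + y ^ 2) := sqrt_pos.mpr (by positivity)
  rw [cos_add, cos_neg, sin_neg, cos_arctan, sin_arctan, hsqrt]
  field_simp
  ring

lemma shifted_cos_combination_eq_poly_cos_sq {n m α s₁ s₂ : ℝ}
    (hs₁ : s₁ = (n - m + 1) * sin α + sin (3 * α))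
    (hs₂ : s₂ = (n + m - 1) * cos α + cos (3 * α)) :
    (m - 1) * (s₂ * cos α - s₁ * sin α) + n * (s₂ * cos α + s₁ * sin α)
        + (s₂ * cos (3 * α) + s₁ * sin (3 * α)) =
      (n - m + 1) * (n - m - 1 + 2 * (m + 1) * cos α ^ 2) +
        2 * (m - 1) * (8 * cos α ^ 4 + (n + m - 7) * cos α ^ 2) + 1 := by
  subst hs₁ hs₂
  rw [sin_three_mul, cos_three_mul]
  linear_combination (-16 * sin α ^ 2 + 16 * sin α ^ 4 - 16 * cos α ^ 2 * sin α ^ 2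
      + 16 * cos α ^ 4 + 8 * m * sin α ^ 2 - 8 * m * cos α ^ 2 + m ^ 2
      - 8 * n * sin α ^ 2 + 8 * n * cos α ^ 2 - 2 * n * m + n ^ 2) * sin_sq_add_cos_sq α

lemma poly_pos_of_three_le_of_nonneg {n m t : ℝ} (hm : 3 ≤ m) (hmn : m + 1 ≤ n) (ht : 0 ≤ t) :
    0 < (n - m + 1) * (n - m - 1 + 2 * (m + 1) * t) +
      2 * (m - 1) * (8 * t ^ 2 + (n + m - 7) * t) + 1 := by
  have h₁ : 0 ≤ (n - m + 1) * (n - m - 1 + 2 * (m + 1) * t) :=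
    mul_nonneg (by linarith) (by nlinarith)
  have h₂ : 0 ≤ 2 * (m - 1) * (8 * t ^ 2 + (n + m - 7) * t) :=
    mul_nonneg (by linarith) (by nlinarith)
  linarith

theorem stmt_14_general (n m : ℕ) (hm : 3 ≤ m) (hmn : m < n)
    (α : ℝ)
    (s₁ s₂ S cα a b c : ℝ)
    (hs₁ : s₁ = ((n : ℝ) - m + 1) * Real.sin α + Real.sin (3 * α))
    (hs₂ : s₂ = ((n : ℝ) + m - 1) * Real.cos α + Real.cos (3 * α))
    (hS : S = Real.sqrt (s₁ ^ 2 + s₂ ^ 2))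
    (hcα : cα = -Real.arctan (s₁ / s₂))
    (hs₂pos : 0 < s₂)
    (ha : a = Real.cos (cα + α)) (hb : b = Real.cos (cα - α))
    (hc : c = -Real.cos (cα + 3 * α)) :
    S * (((m : ℝ) - 1) * b + (n : ℝ) * a - c) =
      ((n : ℝ) - m + 1) * ((n : ℝ) - m - 1 + 2 * ((m : ℝ) + 1) * Real.cos α ^ 2) +
        2 * ((m : ℝ) - 1) * (8 * Real.cos α ^ 4 + ((n : ℝ) + m - 7) * Real.cos α ^ 2) + 1 ∧
    0 < S * (((m : ℝ) - 1) * b + (n : ℝ) * a - c) ∧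
    0 < ((m : ℝ) - 1) * b + (n : ℝ) * a - c := by
  have hrot := sqrt_mul_cos_neg_arctan_div_add (x := s₁) hs₂pos
  have hSa : S * a = s₂ * cos α + s₁ * sin α := by rw [hS, ha, hcα, hrot]
  have hSb : S * b = s₂ * cos α - s₁ * sin α := by
    rw [hS, hb, hcα, sub_eq_add_neg, hrot, cos_neg, sin_neg]; ring
  have hSc : S * c = -(s₂ * cos (3 * α) + s₁ * sin (3 * α)) := by
    rw [hS, hc, hcα, mul_neg, hrot]
  have hid : S * (((m : ℝ) - 1) * b + (n : ℝ) * a - c) =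
      ((n : ℝ) - m + 1) * ((n : ℝ) - m - 1 + 2 * ((m : ℝ) + 1) * cos α ^ 2) +
        2 * ((m : ℝ) - 1) * (8 * cos α ^ 4 + ((n : ℝ) + m - 7) * cos α ^ 2) + 1 := by
    rw [← shifted_cos_combination_eq_poly_cos_sq hs₁ hs₂]
    linear_combination ((m : ℝ) - 1) * hSb + (n : ℝ) * hSa - hSc
  have hpos : 0 < S * (((m : ℝ) - 1) * b + (n : ℝ) * a - c) := by
    rw [hid, show cos α ^ 4 = (cos α ^ 2) ^ 2 by ring]
    exact poly_pos_of_three_le_of_nonneg (by exact_mod_cast hm) (by exact_mod_cast hmn) (sq_nonneg _)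
  have hS0 : 0 < S := hS ▸ sqrt_pos.mpr (by positivity)
  exact ⟨hid, hpos, pos_of_mul_pos_right hpos hS0.le⟩

/-- General case `m ≥ 3`, `n > m`, `m₁ = m−1`, `m₂ = 1`: the identity
`S((m−1)b + na − c) = (n−m+1)(n−m−1+2(m+1)cos²α) + 2(m−1)(8cos⁴α+(n+m−7)cos²α) + 1`
holds and is strictly positive; hence `(m−1)b + na − c > 0`. -/
theorem stmt_14 (n m : ℕ) (hm : 3 ≤ m) (hmn : m < n)
    (α : ℝ) (hα0 : 0 < α) (hα1 : α < π / 2)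
    (s₁ s₂ S cα a b c : ℝ)
    (hs₁ : s₁ = ((n : ℝ) - m + 1) * Real.sin α + Real.sin (3 * α))
    (hs₂ : s₂ = ((n : ℝ) + m - 1) * Real.cos α + Real.cos (3 * α))
    (hS : S = Real.sqrt (s₁ ^ 2 + s₂ ^ 2))
    (hcα : cα = -Real.arctan (s₁ / s₂))
    (hs₂pos : 0 < s₂)
    (ha : a = Real.cos (cα + α)) (hb : b = Real.cos (cα - α))
    (hc : c = -Real.cos (cα + 3 * α)) :
    S * (((m : ℝ) - 1) * b + (n : ℝ) * a - c) =
      ((n : ℝ) - m + 1) * ((n : ℝ) - m - 1 + 2 * ((m : ℝ) + 1) * Real.cos α ^ 2) +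
        2 * ((m : ℝ) - 1) * (8 * Real.cos α ^ 4 + ((n : ℝ) + m - 7) * Real.cos α ^ 2) + 1 ∧
    0 < S * (((m : ℝ) - 1) * b + (n : ℝ) * a - c) ∧
    0 < ((m : ℝ) - 1) * b + (n : ℝ) * a - c :=
  stmt_14_general n m hm hmn α s₁ s₂ S cα a b c hs₁ hs₂ hS hcα hs₂pos ha hb hc
end

section
/- Let m ≥ 2 and n > m, and let a = cos(c(α)+α) > 0 and w₂ = (m−1)·b + n·a − c > 0 for reals b, c (as arising from the Jacobian analysis with m₁ = m−1). Then the matrix M = D + C, with D = diag(n·a, …, n·a, −n·a) ∈ ℝ^{m×m} and C = 𝟙ₘ·(b, …, b, c), has a strictly negative real eigenvalue; namely λ₂ = (w₁ − √(w₁² + 4·n·a·w₂))/2 < 0 where w₁ = (m−1)b + c, with eigenvector (1, …, 1, φ)ᵀ for φ = (λ₂ − n·a − (m−1)b)/c when c ≠ 0. -/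
open Matrix Real

/-
The matrix acts on vectors that are constant on the first `m - 1` coordinates, with
value `x`, and take a value `y` in the last one, as the `2 × 2` matrix
`[[n a + (m-1) b, c], [(m-1) b, c - n a]]` acts on `(x, y)`. Its characteristic polynomial is
`λ² - w₁ λ - n a w₂`, and since `n a w₂ > 0` the smaller root `λ₂` is negative. For `λ = λ₂`
the vector `(c, λ₂ - n a - (m-1) b)` is an eigenvector of the `2 × 2` matrix; it is nonzero
because for `c = 0` its second entry is `λ₂ - w₂ < 0`, and for `c ≠ 0` it is `c` times the
vector `(1, φ)`.
-/

section BlockVec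

variable {R : Type*} {m : ℕ}

def blockVec (m : ℕ) (x y : R) : Fin m → R :=
  fun i => if (i : ℕ) < m - 1 then x else y

theorem smul_blockVec [Mul R] (r x y : R) :
    r • blockVec m x y = blockVec m (r * x) (r * y) := by
  funext i
  simp only [blockVec, Pi.smul_apply, smul_eq_mul]
  split <;> rfl

theorem blockVec_ne_zero [Zero R] (hm : 2 ≤ m) {x y : R} (h : x ≠ 0 ∨ y ≠ 0) :
    blockVec m x y ≠ 0 := by
  intro h0
  rcases h with hx | hy
  · exact hx (by simpa [blockVec, show 0 < m - 1 by omega] using congrFun h0 ⟨0, by omega⟩)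
  · exact hy (by simpa [blockVec] using congrFun h0 ⟨m - 1, by omega⟩)

variable [CommRing R]

theorem sum_blockVec (hm : 1 ≤ m) (x y : R) :
    ∑ j, blockVec m x y j = ((m : R) - 1) * x + y := by
  obtain ⟨k, rfl⟩ : ∃ k, m = k + 1 := ⟨m - 1, by omega⟩
  simp [blockVec, Fin.sum_univ_castSucc]

theorem dotProduct_blockVec (hm : 1 ≤ m) (b c x y : R) :
    blockVec m b c ⬝ᵥ blockVec m x y = ((m : R) - 1) * (b * x) + c * y := by
  rw [← sum_blockVec hm]
  refine Finset.sum_congr rfl fun j _ => ?_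
  simp only [blockVec]
  split <;> rfl

theorem mulVec_blockVec (hm : 1 ≤ m) (d₁ d₂ b c x y : R) :
    (diagonal (blockVec m d₁ d₂) + of fun _ => blockVec m b c) *ᵥ blockVec m x y =
      blockVec m (d₁ * x + (((m : R) - 1) * (b * x) + c * y))
        (d₂ * y + (((m : R) - 1) * (b * x) + c * y)) := by
  have hC : (of fun _ => blockVec m b c) *ᵥ blockVec m x y =
      fun _ : Fin m => ((m : R) - 1) * (b * x) + c * y :=
    funext fun _ => dotProduct_blockVec hm b c x y
  funext i
  rw [add_mulVec, hC]
  simp only [Pi.add_apply, mulVec_diagonal, blockVec]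
  split <;> rfl

theorem mulVec_blockVec_eq_smul_of_sq_eq (hm : 1 ≤ m) {d b c l : R}
    (hl : l ^ 2 = (((m : R) - 1) * b + c) * l + d * (((m : R) - 1) * b + d - c)) :
    (diagonal (blockVec m d (-d)) + of fun _ => blockVec m b c) *ᵥ
        blockVec m c (l - d - ((m : R) - 1) * b) =
      l • blockVec m c (l - d - ((m : R) - 1) * b) := by
  rw [mulVec_blockVec hm, smul_blockVec]
  congr 1
  · ring
  · linear_combination -hl

end BlockVec

theorem sub_sqrt_div_two_lt_zero (w : ℝ) {p : ℝ} (hp : 0 < p) :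
    (w - √(w ^ 2 + 4 * p)) / 2 < 0 := by
  have hsq : √(w ^ 2 + 4 * p) ^ 2 = w ^ 2 + 4 * p := sq_sqrt (by positivity)
  nlinarith [sqrt_nonneg (w ^ 2 + 4 * p)]

theorem sub_sqrt_div_two_sq (w : ℝ) {p : ℝ} (hp : 0 ≤ w ^ 2 + 4 * p) :
    ((w - √(w ^ 2 + 4 * p)) / 2) ^ 2 = w * ((w - √(w ^ 2 + 4 * p)) / 2) + p := by
  linear_combination (sq_sqrt hp) / 4

/-- With `a > 0` and `w₂ = (m−1)b + na − c > 0`, the matrix `D + C` (with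
`D = diag(na,…,na,−na)` and `C = 𝟙ₘ(b,…,b,c)`) has the strictly negative
eigenvalue `λ₂ = (w₁ − √(w₁² + 4naw₂))/2`, with eigenvector `(1,…,1,φ)ᵀ`,
`φ = (λ₂ − na − (m−1)b)/c`, when `c ≠ 0`. -/
theorem stmt_19 (m n : ℕ) (hm : 2 ≤ m) (hmn : m < n)
    (a b c : ℝ) (ha : 0 < a)
    (w₁ w₂ : ℝ)
    (hw₁ : w₁ = ((m : ℝ) - 1) * b + c)
    (hw₂ : w₂ = ((m : ℝ) - 1) * b + (n : ℝ) * a - c)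
    (hw₂pos : 0 < w₂)
    (D C : Matrix (Fin m) (Fin m) ℝ)
    (hD : D = Matrix.diagonal (fun i : Fin m => if (i : ℕ) < m - 1 then (n : ℝ) * a else -((n : ℝ) * a)))
    (hC : C = Matrix.of fun _ j : Fin m => if (j : ℕ) < m - 1 then b else c)
    (l₂ : ℝ) (hl₂ : l₂ = (w₁ - Real.sqrt (w₁ ^ 2 + 4 * n * a * w₂)) / 2) :
    l₂ < 0 ∧
    (∃ v : Fin m → ℝ, v ≠ 0 ∧ (D + C).mulVec v = l₂ • v) ∧
    (c ≠ 0 →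
      (D + C).mulVec
        (fun i : Fin m => if (i : ℕ) < m - 1 then 1 else (l₂ - (n : ℝ) * a - ((m : ℝ) - 1) * b) / c) =
      l₂ • (fun i : Fin m => if (i : ℕ) < m - 1 then 1 else (l₂ - (n : ℝ) * a - ((m : ℝ) - 1) * b) / c)) := by
  subst hD hC
  have hp : 0 < (n : ℝ) * a * w₂ := by
    have : (0 : ℝ) < n := by exact_mod_cast (by omega : 0 < n)
    positivity
  rw [show 4 * (n : ℝ) * a * w₂ = 4 * (n * a * w₂) by ring] at hl₂
  have hneg : l₂ < 0 := hl₂ ▸ sub_sqrt_div_two_lt_zero w₁ hp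
  have hsq : l₂ ^ 2 = w₁ * l₂ + n * a * w₂ := hl₂ ▸ sub_sqrt_div_two_sq w₁ (by positivity)
  set v := blockVec m c (l₂ - n * a - ((m : ℝ) - 1) * b)
  have hv : (diagonal (blockVec m (n * a) (-(n * a))) + of fun _ => blockVec m b c) *ᵥ v = l₂ • v :=
    mulVec_blockVec_eq_smul_of_sq_eq (by omega) (by rw [hsq, hw₁, hw₂])
  have hv0 : v ≠ 0 := by
    refine blockVec_ne_zero hm (or_iff_not_imp_left.2 fun hc => ?_)
    rw [not_not] at hc
    subst hc
    linarith
  refine ⟨hneg, ⟨v, hv0, hv⟩, fun hc => ?_⟩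
  have hφ : blockVec m 1 ((l₂ - n * a - ((m : ℝ) - 1) * b) / c) = c⁻¹ • v := by
    rw [smul_blockVec, inv_mul_cancel₀ hc, inv_mul_eq_div]
  change (diagonal (blockVec m (n * a) (-(n * a))) + of fun _ => blockVec m b c) *ᵥ
    blockVec m 1 _ = l₂ • blockVec m 1 _
  rw [hφ, mulVec_smul, hv, smul_comm]
end
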